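/- arXiv:2506.08333 — 2 statements merged into one kernel-verified Lean document; each statement's English description precedes it below -/
import Mathlib

section
/- Let β⁺,β⁻:[0,1]³→[0,∞) be measurable with β⁺,β⁻ ∈ L¹([0,1]³) and β⁺,β⁻ ≥ c_β > 0 a.e. for some constant c_β. For φ ∈ W₀, let U(φ) be the set of pairs of measurable functions α⁺,α⁻:[0,1]³→[0,∞) such that α⁺β⁺(1−φ) = α⁻β⁻φ almost everywhere on [0,1]³. Then inf over (α⁺,α⁻) ∈ U(φ) of ∫_{[0,1]³} [ ℓ(α⁺)β⁺(1−φ) + ℓ(α⁻)β⁻φ ] equals J^{(β⁺,β⁻)}(φ). -/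
/-!
Pointwise, write `A = β⁺(1 − φ)`, `B = β⁻φ` and `m = α⁺A = α⁻B`. If `m = 0` the integrand is
`A + B ≥ (√A − √B)²`. Otherwise `A, B > 0` and completing the square gives
`ℓ(α⁺)A + ℓ(α⁻)B = 2√(AB) ℓ(m / √(AB)) + (√A − √B)²`, so `ℓ ≥ 0` bounds the integrand below
by the integrand of `J`, with equality for `α⁺ = √(B/A)`, `α⁻ = √(A/B)` (where `m = √(AB)`).
The infimum of the integrals is therefore attained by this measurable control.
-/

open MeasureTheory Filter Set
open scoped ENNReal

noncomputable section

/-- The unit interval `[0,1]` as a subset of `ℝ`. -/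
def I01 : Set ℝ := Set.Icc 0 1

/-- The unit cube `[0,1]³`. -/
def cube3 : Set (ℝ × ℝ × ℝ) := I01 ×ˢ I01 ×ˢ I01

/-- Membership in `W₀`: a measurable function `[0,1]³ → [0,1]`. -/
def MemW0 (φ : ℝ × ℝ × ℝ → ℝ) : Prop :=
  Measurable φ ∧ ∀ p ∈ cube3, φ p ∈ Set.Icc (0:ℝ) 1

/-- The rate function
`J^{(β⁺,β⁻)}(φ) = ∫_{[0,1]³} (√(β⁺(1−φ)) − √(β⁻φ))²`. -/
def Jfun (βp βm φ : ℝ × ℝ × ℝ → ℝ) : ℝ :=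
  ∫ p in cube3, (Real.sqrt (βp p * (1 - φ p)) - Real.sqrt (βm p * φ p)) ^ 2

/-- `ℓ(x) = x log x − x + 1` (so that `ℓ(0) = 1`, since `Real.log 0 = 0`). -/
def ell (x : ℝ) : ℝ := x * Real.log x - x + 1

open Real InformationTheory

lemma ell_eq_klFun (x : ℝ) : ell x = klFun x := by
  rw [ell, klFun_apply]; ring

lemma ell_nonneg {x : ℝ} (hx : 0 ≤ x) : 0 ≤ ell x :=
  ell_eq_klFun x ▸ klFun_nonneg hx

lemma ell_one : ell 1 = 0 := ell_eq_klFun 1 ▸ klFun_one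

lemma ell_mul_of_mul_eq_zero {a A : ℝ} (h : a * A = 0) : ell a * A = A := by
  rcases mul_eq_zero.1 h with rfl | rfl <;> simp [ell]

lemma ell_div_mul {m A : ℝ} (hA : A ≠ 0) :
    ell (m / A) * A = m * (log m - log A) - m + A := by
  rcases eq_or_ne m 0 with rfl | hm
  · simp [ell]
  · rw [ell, log_div hm hA]
    field_simp

lemma sq_sqrt_sub_sqrt_le_add {A B : ℝ} (hA : 0 ≤ A) (hB : 0 ≤ B) :
    (√A - √B) ^ 2 ≤ A + B := by
  nlinarith [sq_sqrt hA, sq_sqrt hB, mul_nonneg (sqrt_nonneg A) (sqrt_nonneg B)]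

lemma ell_mul_add_ell_mul_eq {A B a b : ℝ} (hA : 0 < A) (hB : 0 < B) (h : a * A = b * B) :
    ell a * A + ell b * B
      = 2 * (ell (a * A / (√A * √B)) * (√A * √B)) + (√A - √B) ^ 2 := by
  have hc : √A * √B ≠ 0 := by positivity
  have hlog : log (√A * √B) = (log A + log B) / 2 := by
    rw [log_mul (by positivity) (by positivity), log_sqrt hA.le, log_sqrt hB.le]; ring
  have ha : ell a * A = ell (a * A / A) * A := by rw [mul_div_cancel_right₀ _ hA.ne']
  have hb : ell b * B = ell (a * A / B) * B := by rw [h, mul_div_cancel_right₀ _ hB.ne']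
  rw [ha, hb, ell_div_mul hA.ne', ell_div_mul hB.ne', ell_div_mul hc, hlog, sub_sq,
    sq_sqrt hA.le, sq_sqrt hB.le]
  ring

lemma sq_sqrt_sub_sqrt_le_ell_mul_add {A B a b : ℝ} (hA : 0 ≤ A) (hB : 0 ≤ B)
    (ha : 0 ≤ a) (hb : 0 ≤ b) (h : a * A = b * B) :
    (√A - √B) ^ 2 ≤ ell a * A + ell b * B := by
  rcases (mul_nonneg ha hA).eq_or_lt with hm | hm
  · rw [ell_mul_of_mul_eq_zero hm.symm, ell_mul_of_mul_eq_zero (h ▸ hm.symm)]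
    exact sq_sqrt_sub_sqrt_le_add hA hB
  · have hA' : 0 < A := pos_of_mul_pos_right hm ha
    have hB' : 0 < B := pos_of_mul_pos_right (h ▸ hm) hb
    rw [ell_mul_add_ell_mul_eq hA' hB' h]
    exact le_add_of_nonneg_left
      (mul_nonneg zero_le_two (mul_nonneg (ell_nonneg (by positivity)) (by positivity)))

lemma sqrt_div_mul_self {A : ℝ} (B : ℝ) (hA : 0 ≤ A) : √(B / A) * A = √A * √B := by
  rcases hA.eq_or_lt with rfl | hA'
  · simp
  · rw [sqrt_div' B hA]
    field_simp
    rw [sq_sqrt hA]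

lemma ell_sqrt_div_mul_add_eq {A B : ℝ} (hA : 0 ≤ A) (hB : 0 ≤ B) :
    ell √(B / A) * A + ell √(A / B) * B = (√A - √B) ^ 2 := by
  rcases hA.eq_or_lt with rfl | hA'
  · simp [ell, sq_sqrt hB]
  rcases hB.eq_or_lt with rfl | hB'
  · simp [ell, sq_sqrt hA]
  have h := (sqrt_div_mul_self B hA).trans
    ((mul_comm _ _).trans (sqrt_div_mul_self A hB).symm)
  rw [ell_mul_add_ell_mul_eq hA' hB' h, sqrt_div_mul_self B hA,
    div_self (by positivity), ell_one]
  ring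

section

variable {X : Type*} [MeasurableSpace X] {μ : Measure X} {A B : X → ℝ}

theorem iInf_lintegral_ell_eq (hA : Measurable A) (hB : Measurable B)
    (hA0 : ∀ᵐ x ∂μ, 0 ≤ A x) (hB0 : ∀ᵐ x ∂μ, 0 ≤ B x) :
    ⨅ (α : (X → ℝ) × (X → ℝ))
      (_ : Measurable α.1 ∧ Measurable α.2 ∧ (∀ x, 0 ≤ α.1 x) ∧ (∀ x, 0 ≤ α.2 x) ∧
        ∀ᵐ x ∂μ, α.1 x * A x = α.2 x * B x),
      ∫⁻ x, ENNReal.ofReal (ell (α.1 x) * A x + ell (α.2 x) * B x) ∂μ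
      = ∫⁻ x, ENNReal.ofReal ((√(A x) - √(B x)) ^ 2) ∂μ := by
  refine le_antisymm ?_ (le_iInf₂ fun α ⟨_, _, hα₁, hα₂, hαAB⟩ => ?_)
  · refine iInf₂_le_of_le (fun x => √(B x / A x), fun x => √(A x / B x))
      ⟨(hB.div hA).sqrt, (hA.div hB).sqrt, fun _ => sqrt_nonneg _, fun _ => sqrt_nonneg _, ?_⟩
      (lintegral_congr_ae ?_).le
    · filter_upwards [hA0, hB0] with x hAx hBx
      rw [sqrt_div_mul_self _ hAx, sqrt_div_mul_self _ hBx, mul_comm]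
    · filter_upwards [hA0, hB0] with x hAx hBx
      rw [ell_sqrt_div_mul_add_eq hAx hBx]
  · refine lintegral_mono_ae ?_
    filter_upwards [hA0, hB0, hαAB] with x hAx hBx hx
    exact ENNReal.ofReal_le_ofReal
      (sq_sqrt_sub_sqrt_le_ell_mul_add hAx hBx (hα₁ x) (hα₂ x) hx)

lemma MeasureTheory.Integrable.sq_sqrt_sub_sqrt (hA : Integrable A μ) (hB : Integrable B μ)
    (hA0 : ∀ᵐ x ∂μ, 0 ≤ A x) (hB0 : ∀ᵐ x ∂μ, 0 ≤ B x) :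
    Integrable (fun x => (√(A x) - √(B x)) ^ 2) μ := by
  refine (hA.add hB).mono' ?_ ?_
  · exact ((continuous_sqrt.comp_aestronglyMeasurable hA.1).sub
      (continuous_sqrt.comp_aestronglyMeasurable hB.1)).pow 2
  · filter_upwards [hA0, hB0] with x hAx hBx
    rw [norm_of_nonneg (sq_nonneg _)]
    exact sq_sqrt_sub_sqrt_le_add hAx hBx

end

lemma MemW0.ae_mem_Icc {φ : ℝ × ℝ × ℝ → ℝ} (hφ : MemW0 φ) :
    ∀ᵐ p ∂(volume.restrict cube3), φ p ∈ Icc (0 : ℝ) 1 := by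
  have hcube : MeasurableSet cube3 :=
    measurableSet_Icc.prod (measurableSet_Icc.prod measurableSet_Icc)
  filter_upwards [ae_restrict_mem hcube] with p hp
  exact hφ.2 p hp

theorem control_representation_of_rate_general
    (βp βm : ℝ × ℝ × ℝ → ℝ)
    (hβp_meas : Measurable βp) (hβm_meas : Measurable βm)
    (hβp_int : IntegrableOn βp cube3) (hβm_int : IntegrableOn βm cube3)
    (hβp_nonneg : ∀ p, 0 ≤ βp p) (hβm_nonneg : ∀ p, 0 ≤ βm p)
    (φ : ℝ × ℝ × ℝ → ℝ) (hφ : MemW0 φ) :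
    ⨅ (α : (ℝ × ℝ × ℝ → ℝ) × (ℝ × ℝ × ℝ → ℝ))
      (_ : Measurable α.1 ∧ Measurable α.2 ∧ (∀ p, 0 ≤ α.1 p) ∧ (∀ p, 0 ≤ α.2 p) ∧
        (∀ᵐ p ∂(volume.restrict cube3),
          α.1 p * (βp p * (1 - φ p)) = α.2 p * (βm p * φ p))),
      ∫⁻ p in cube3,
        ENNReal.ofReal (ell (α.1 p) * (βp p * (1 - φ p)) + ell (α.2 p) * (βm p * φ p))
      = ENNReal.ofReal (Jfun βp βm φ) := by
  have hφ01 := hφ.ae_mem_Icc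
  have hA0 : ∀ᵐ p ∂(volume.restrict cube3), 0 ≤ βp p * (1 - φ p) :=
    hφ01.mono fun p hp => mul_nonneg (hβp_nonneg p) (sub_nonneg.2 hp.2)
  have hB0 : ∀ᵐ p ∂(volume.restrict cube3), 0 ≤ βm p * φ p :=
    hφ01.mono fun p hp => mul_nonneg (hβm_nonneg p) hp.1
  have hA_int : Integrable (fun p => βp p * (1 - φ p)) (volume.restrict cube3) :=
    hβp_int.mul_bdd (c := 1) (measurable_const.sub hφ.1).aestronglyMeasurable
      (hφ01.mono fun p hp => by rw [norm_of_nonneg (sub_nonneg.2 hp.2)]; linarith [hp.1])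
  have hB_int : Integrable (fun p => βm p * φ p) (volume.restrict cube3) :=
    hβm_int.mul_bdd (c := 1) hφ.1.aestronglyMeasurable
      (hφ01.mono fun p hp => by rw [norm_of_nonneg hp.1]; exact hp.2)
  rw [Jfun, ofReal_integral_eq_lintegral_ofReal (hA_int.sq_sqrt_sub_sqrt hB_int hA0 hB0)
    (ae_of_all _ fun _ => sq_nonneg _)]
  exact iInf_lintegral_ell_eq (hβp_meas.mul (measurable_const.sub hφ.1))
    (hβm_meas.mul hφ.1) hA0 hB0

/-- **Lemma (control representation of the rate function).**
For measurable `β⁺, β⁻ ∈ L¹([0,1]³)` bounded below by `c_β > 0` a.e. and `φ ∈ W₀`,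
the infimum of `∫ [ℓ(α⁺)β⁺(1−φ) + ℓ(α⁻)β⁻φ]` over measurable nonnegative pairs
`(α⁺, α⁻)` with `α⁺β⁺(1−φ) = α⁻β⁻φ` a.e. equals `J^{(β⁺,β⁻)}(φ)`. -/
theorem control_representation_of_rate
    (βp βm : ℝ × ℝ × ℝ → ℝ)
    (hβp_meas : Measurable βp) (hβm_meas : Measurable βm)
    (hβp_int : IntegrableOn βp cube3) (hβm_int : IntegrableOn βm cube3)
    (cβ : ℝ) (hcβ : 0 < cβ)
    (hβ_lb : ∀ᵐ p ∂(volume.restrict cube3), cβ ≤ βp p ∧ cβ ≤ βm p)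
    (hβp_nonneg : ∀ p, 0 ≤ βp p) (hβm_nonneg : ∀ p, 0 ≤ βm p)
    (φ : ℝ × ℝ × ℝ → ℝ) (hφ : MemW0 φ) :
    ⨅ (α : (ℝ × ℝ × ℝ → ℝ) × (ℝ × ℝ × ℝ → ℝ))
      (_ : Measurable α.1 ∧ Measurable α.2 ∧ (∀ p, 0 ≤ α.1 p) ∧ (∀ p, 0 ≤ α.2 p) ∧
        (∀ᵐ p ∂(volume.restrict cube3),
          α.1 p * (βp p * (1 - φ p)) = α.2 p * (βm p * φ p))),
      ∫⁻ p in cube3,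
        ENNReal.ofReal (ell (α.1 p) * (βp p * (1 - φ p)) + ell (α.2 p) * (βm p * φ p))
      = ENNReal.ofReal (Jfun βp βm φ) :=
  control_representation_of_rate_general βp βm hβp_meas hβm_meas hβp_int hβm_int hβp_nonneg
    hβm_nonneg φ hφ
end
end

section
/- Let β⁺,β⁻,α⁺,α⁻ ∈ L¹([0,1]³) be nonnegative measurable functions. Then for every φ ∈ W₀, | J^{(β⁺,β⁻)}(φ) − J^{(α⁺,α⁻)}(φ) | ≤ ‖β⁺−α⁺‖_{L¹} + ‖β⁻−α⁻‖_{L¹} + 2‖ √(β⁺β⁻) − √(α⁺α⁻) ‖_{L¹}. -/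
open MeasureTheory Filter Set
open scoped ENNReal

noncomputable section

lemma aux_expand (a b t : ℝ) (ha : 0 ≤ a) (hb : 0 ≤ b) (ht : 0 ≤ t) (ht1 : t ≤ 1) :
    (Real.sqrt (a*(1-t)) - Real.sqrt (b*t))^2
      = a*(1-t) + b*t - 2*Real.sqrt (a*b)*Real.sqrt (t*(1-t)) := by
  have h1t : (0:ℝ) ≤ 1 - t := by linarith
  have hxx : Real.sqrt (a*(1-t)) * Real.sqrt (b*t) = Real.sqrt (a*b) * Real.sqrt (t*(1-t)) := by
    rw [← Real.sqrt_mul (by positivity), ← Real.sqrt_mul (by positivity)]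
    ring_nf
  have h1 : Real.sqrt (a*(1-t)) ^ 2 = a*(1-t) := Real.sq_sqrt (by positivity)
  have h2 : Real.sqrt (b*t) ^ 2 = b*t := Real.sq_sqrt (by positivity)
  nlinarith [h1, h2, hxx]

lemma aux_sqrt_le_add (a b : ℝ) (ha : 0 ≤ a) (hb : 0 ≤ b) : Real.sqrt (a*b) ≤ a + b := by
  have : a*b ≤ (a+b)^2 := by nlinarith
  calc Real.sqrt (a*b) ≤ Real.sqrt ((a+b)^2) := Real.sqrt_le_sqrt this
    _ = a + b := Real.sqrt_sq (by positivity)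

lemma cube3_meas : MeasurableSet cube3 :=
  (measurableSet_Icc).prod ((measurableSet_Icc).prod measurableSet_Icc)

/-- Integrability of the rate integrand. -/
lemma aux_integrand_int (βp βm φ : ℝ × ℝ × ℝ → ℝ)
    (hβp_meas : Measurable βp) (hβm_meas : Measurable βm)
    (hβp_nonneg : ∀ p, 0 ≤ βp p) (hβm_nonneg : ∀ p, 0 ≤ βm p)
    (hβp_int : IntegrableOn βp cube3) (hβm_int : IntegrableOn βm cube3)
    (hφ : MemW0 φ) :
    IntegrableOn
      (fun p => (Real.sqrt (βp p * (1 - φ p)) - Real.sqrt (βm p * φ p)) ^ 2) cube3 := by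
  apply Integrable.mono' (hβp_int.add hβm_int)
  · exact (((hβp_meas.mul (measurable_const.sub hφ.1)).sqrt.sub
      (hβm_meas.mul hφ.1).sqrt).pow_const 2).aestronglyMeasurable
  · rw [ae_restrict_iff' cube3_meas]
    filter_upwards with p hp
    obtain ⟨h0, h1⟩ := hφ.2 p hp
    rw [Real.norm_eq_abs, abs_of_nonneg (by positivity), Pi.add_apply]
    have ha : Real.sqrt (βp p * (1 - φ p)) ^ 2 = βp p * (1 - φ p) :=
      Real.sq_sqrt (by nlinarith [hβp_nonneg p])
    have hb : Real.sqrt (βm p * φ p) ^ 2 = βm p * φ p :=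
      Real.sq_sqrt (by nlinarith [hβm_nonneg p])
    nlinarith [mul_nonneg (Real.sqrt_nonneg (βp p * (1 - φ p)))
        (Real.sqrt_nonneg (βm p * φ p)),
      mul_nonneg (hβp_nonneg p) h0, mul_nonneg (hβm_nonneg p) (by linarith : (0:ℝ) ≤ 1 - φ p)]

lemma aux_sqrt_prod_int (βp βm : ℝ × ℝ × ℝ → ℝ)
    (hβp_meas : Measurable βp) (hβm_meas : Measurable βm)
    (hβp_nonneg : ∀ p, 0 ≤ βp p) (hβm_nonneg : ∀ p, 0 ≤ βm p)
    (hβp_int : IntegrableOn βp cube3) (hβm_int : IntegrableOn βm cube3) :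
    IntegrableOn (fun p => Real.sqrt (βp p * βm p)) cube3 := by
  apply Integrable.mono' (hβp_int.add hβm_int)
  · exact (hβp_meas.mul hβm_meas).sqrt.aestronglyMeasurable
  · filter_upwards with p
    rw [Real.norm_eq_abs, abs_of_nonneg (Real.sqrt_nonneg _), Pi.add_apply]
    exact aux_sqrt_le_add _ _ (hβp_nonneg p) (hβm_nonneg p)

/-- **Lemma (uniform comparison of rate functions).**
For nonnegative `β⁺, β⁻, α⁺, α⁻ ∈ L¹([0,1]³)` and any `φ ∈ W₀`,
`|J^{(β⁺,β⁻)}(φ) − J^{(α⁺,α⁻)}(φ)| ≤ ‖β⁺−α⁺‖₁ + ‖β⁻−α⁻‖₁ + 2‖√(β⁺β⁻) − √(α⁺α⁻)‖₁`. -/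
theorem rate_function_comparison
    (βp βm αp αm : ℝ × ℝ × ℝ → ℝ)
    (hβp_meas : Measurable βp) (hβm_meas : Measurable βm)
    (hαp_meas : Measurable αp) (hαm_meas : Measurable αm)
    (hβp_nonneg : ∀ p, 0 ≤ βp p) (hβm_nonneg : ∀ p, 0 ≤ βm p)
    (hαp_nonneg : ∀ p, 0 ≤ αp p) (hαm_nonneg : ∀ p, 0 ≤ αm p)
    (hβp_int : IntegrableOn βp cube3) (hβm_int : IntegrableOn βm cube3)
    (hαp_int : IntegrableOn αp cube3) (hαm_int : IntegrableOn αm cube3)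
    (φ : ℝ × ℝ × ℝ → ℝ) (hφ : MemW0 φ) :
    |Jfun βp βm φ - Jfun αp αm φ|
      ≤ (∫ p in cube3, |βp p - αp p|) + (∫ p in cube3, |βm p - αm p|)
        + 2 * ∫ p in cube3, |Real.sqrt (βp p * βm p) - Real.sqrt (αp p * αm p)| := by
  set fβ : ℝ × ℝ × ℝ → ℝ :=
    fun p => (Real.sqrt (βp p * (1 - φ p)) - Real.sqrt (βm p * φ p)) ^ 2 with hfβ_def
  set fα : ℝ × ℝ × ℝ → ℝ :=
    fun p => (Real.sqrt (αp p * (1 - φ p)) - Real.sqrt (αm p * φ p)) ^ 2 with hfα_def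
  have hfβ : IntegrableOn fβ cube3 :=
    aux_integrand_int βp βm φ hβp_meas hβm_meas hβp_nonneg hβm_nonneg hβp_int hβm_int hφ
  have hfα : IntegrableOn fα cube3 :=
    aux_integrand_int αp αm φ hαp_meas hαm_meas hαp_nonneg hαm_nonneg hαp_int hαm_int hφ
  have hdiff : Jfun βp βm φ - Jfun αp αm φ = ∫ p in cube3, (fβ p - fα p) :=
    (integral_sub hfβ hfα).symm
  -- integrability of the bounding function pieces
  have hint1 : IntegrableOn (fun p => |βp p - αp p|) cube3 := (hβp_int.sub hαp_int).abs
  have hint2 : IntegrableOn (fun p => |βm p - αm p|) cube3 := (hβm_int.sub hαm_int).abs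
  have hsβ := aux_sqrt_prod_int βp βm hβp_meas hβm_meas hβp_nonneg hβm_nonneg hβp_int hβm_int
  have hsα := aux_sqrt_prod_int αp αm hαp_meas hαm_meas hαp_nonneg hαm_nonneg hαp_int hαm_int
  have hint3 : IntegrableOn
      (fun p => |Real.sqrt (βp p * βm p) - Real.sqrt (αp p * αm p)|) cube3 :=
    (hsβ.sub hsα).abs
  have hg : IntegrableOn
      (fun p => |βp p - αp p| + |βm p - αm p|
        + 2 * |Real.sqrt (βp p * βm p) - Real.sqrt (αp p * αm p)|) cube3 :=
    (hint1.add hint2).add (hint3.const_mul 2)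
  calc |Jfun βp βm φ - Jfun αp αm φ|
      = |∫ p in cube3, (fβ p - fα p)| := by rw [hdiff]
    _ ≤ ∫ p in cube3, |fβ p - fα p| := by
        simpa [Real.norm_eq_abs] using
          norm_integral_le_integral_norm (μ := volume.restrict cube3) (fun p => fβ p - fα p)
    _ ≤ ∫ p in cube3, (|βp p - αp p| + |βm p - αm p|
          + 2 * |Real.sqrt (βp p * βm p) - Real.sqrt (αp p * αm p)|) := by
        have habs : Integrable (fun p => |fβ p - fα p|) (volume.restrict cube3) :=
          (hfβ.sub hfα).abs
        apply integral_mono_ae habs hg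
        rw [EventuallyLE, ae_restrict_iff' cube3_meas]
        filter_upwards with p hp
        obtain ⟨h0, h1⟩ := hφ.2 p hp
        simp only [hfβ_def, hfα_def]
        rw [aux_expand _ _ _ (hβp_nonneg p) (hβm_nonneg p) h0 h1,
            aux_expand _ _ _ (hαp_nonneg p) (hαm_nonneg p) h0 h1]
        have hA : βp p * (1 - φ p) + βm p * φ p
              - 2 * Real.sqrt (βp p * βm p) * Real.sqrt (φ p * (1 - φ p))
            - (αp p * (1 - φ p) + αm p * φ p
              - 2 * Real.sqrt (αp p * αm p) * Real.sqrt (φ p * (1 - φ p)))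
            = (βp p - αp p) * (1 - φ p) + (βm p - αm p) * φ p
              - 2 * (Real.sqrt (βp p * βm p) - Real.sqrt (αp p * αm p))
                * Real.sqrt (φ p * (1 - φ p)) := by ring
        rw [hA]
        have hs1 : Real.sqrt (φ p * (1 - φ p)) ≤ 1 := Real.sqrt_le_one.mpr (by nlinarith)
        have hs0 : 0 ≤ Real.sqrt (φ p * (1 - φ p)) := Real.sqrt_nonneg _
        calc |(βp p - αp p) * (1 - φ p) + (βm p - αm p) * φ p
              - 2 * (Real.sqrt (βp p * βm p) - Real.sqrt (αp p * αm p))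
                * Real.sqrt (φ p * (1 - φ p))|
            ≤ |(βp p - αp p) * (1 - φ p)| + |(βm p - αm p) * φ p|
              + |2 * (Real.sqrt (βp p * βm p) - Real.sqrt (αp p * αm p))
                * Real.sqrt (φ p * (1 - φ p))| := by
              refine (abs_sub _ _).trans ?_
              gcongr
              exact abs_add_le _ _
          _ ≤ |βp p - αp p| + |βm p - αm p|
              + 2 * |Real.sqrt (βp p * βm p) - Real.sqrt (αp p * αm p)| := by
              gcongr ?_ + ?_ + ?_
              · rw [abs_mul, abs_of_nonneg (by linarith : (0:ℝ) ≤ 1 - φ p)]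
                nlinarith [abs_nonneg (βp p - αp p)]
              · rw [abs_mul, abs_of_nonneg h0]
                nlinarith [abs_nonneg (βm p - αm p)]
              · rw [abs_mul, abs_mul, abs_two, abs_of_nonneg hs0]
                nlinarith [abs_nonneg (Real.sqrt (βp p * βm p) - Real.sqrt (αp p * αm p))]
    _ = (∫ p in cube3, |βp p - αp p|) + (∫ p in cube3, |βm p - αm p|)
        + 2 * ∫ p in cube3, |Real.sqrt (βp p * βm p) - Real.sqrt (αp p * αm p)| := by
        have hI12 : Integrable (fun p => |βp p - αp p| + |βm p - αm p|)
            (volume.restrict cube3) := hint1.add hint2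
        have hI3 : Integrable
            (fun p => 2 * |Real.sqrt (βp p * βm p) - Real.sqrt (αp p * αm p)|)
            (volume.restrict cube3) := hint3.const_mul 2
        rw [integral_add hI12 hI3, integral_add hint1 hint2, integral_const_mul]
end
end
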